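/- Let 1 ≤ p < p₀ < ∞, λ, μ > 0, and β, δ ∈ ℝ with β + (n−λ)/p = δ + (n−μ)/p₀. Then ‖f‖_{LM^p(φ_λ, w_β^p)} ≲ ‖f‖_{LM^{p₀}(φ_μ, w_δ^{p₀})} for all measurable f, where φ_λ(B) = r_B^λ and w_β(x) = |x|^β. -/

import Mathlib

open MeasureTheory Metric Set ENNReal

noncomputable section

abbrev Euc (n : ℕ) := EuclideanSpace ℝ (Fin n)

/-- Extended-real weighted local Morrey norm (sup over balls centered at the origin). -/
def lmNormE (n : ℕ) (p : ℝ) (φ : ℝ → ℝ≥0∞) (w : Euc n → ℝ≥0∞) (g : Euc n → ℝ≥0∞) : ℝ≥0∞ :=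
  ⨆ (R : ℝ) (_ : 0 < R),
    ((φ R)⁻¹ * ∫⁻ x in ball (0 : Euc n) R, g x ^ p * w x) ^ (1 / p)

def lmNorm (n : ℕ) (p : ℝ) (φ : ℝ → ℝ≥0∞) (w : Euc n → ℝ≥0∞) (f : Euc n → ℝ) : ℝ≥0∞ :=
  lmNormE n p φ w (fun x => ENNReal.ofReal |f x|)

/-- Weak weighted local Morrey norm (for nonnegative extended-real valued functions). -/
def wlmNormE (n : ℕ) (q : ℝ) (ψ : ℝ → ℝ≥0∞) (v : Euc n → ℝ≥0∞) (g : Euc n → ℝ≥0∞) : ℝ≥0∞ :=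
  ⨆ (R : ℝ) (_ : 0 < R) (t : ℝ≥0∞) (_ : 0 < t),
    t * ((ψ R)⁻¹ * ∫⁻ x in {x : Euc n | x ∈ ball (0 : Euc n) R ∧ t < g x}, v x) ^ (1 / q)

def Doubling (φ : ℝ → ℝ≥0∞) : Prop := ∃ C : ℝ≥0∞, C < ⊤ ∧ ∀ R > (0 : ℝ), φ (2 * R) ≤ C * φ R

def RevDoubling (φ : ℝ → ℝ≥0∞) : Prop :=
  ∃ C : ℝ≥0∞, C < ⊤ ∧ ∀ R > (0 : ℝ), ∀ b ∈ Set.Ioo (0 : ℝ) 1,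
    ∑' j : ℕ, φ (b ^ j * R) ≤ C * φ R

/-- The fractional maximal operator `M_α` (the Hardy–Littlewood maximal
operator when `α = 0`). -/
def fracMax (n : ℕ) (α : ℝ) (g : Euc n → ℝ≥0∞) (x : Euc n) : ℝ≥0∞ :=
  ⨆ (c : Euc n) (r : ℝ) (_ : 0 < r ∧ x ∈ ball c r),
    (volume (ball c r)) ^ (α / (n : ℝ) - 1) * ∫⁻ y in ball c r, g y

/-- The fractional integral (Riesz potential) `I_α`. -/
def fracInt (n : ℕ) (α : ℝ) (g : Euc n → ℝ≥0∞) (x : Euc n) : ℝ≥0∞ :=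
  ∫⁻ y, g y * ENNReal.ofReal (‖x - y‖ ^ (α - (n : ℝ)))

/-- The Köthe dual norm of a weighted local Morrey space, evaluated on a
nonnegative (extended-real valued) function. -/
def kdualLM (n : ℕ) (p : ℝ) (φ : ℝ → ℝ≥0∞) (w : Euc n → ℝ≥0∞) (g : Euc n → ℝ≥0∞) : ℝ≥0∞ :=
  ⨆ (f : Euc n → ℝ) (_ : Measurable f ∧ lmNorm n p φ w f ≤ 1),
    ∫⁻ x, ENNReal.ofReal |f x| * g x

/-- The characteristic function of a ball, as an `ℝ≥0∞` valued function. -/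
def chiE (n : ℕ) (c : Euc n) (r : ℝ) : Euc n → ℝ≥0∞ := (ball c r).indicator fun _ => (1 : ℝ≥0∞)

/-- Samko-type Morrey parameter function `φ_λ(B) = r_B ^ λ`. -/
def phiS (lam : ℝ) : ℝ → ℝ≥0∞ := fun R => ENNReal.ofReal (R ^ lam)

/-- Power weight `w_β(x) = |x| ^ β` (raised to the exponent `s`). -/
def powW (n : ℕ) (β s : ℝ) : Euc n → ℝ≥0∞ := fun x => ENNReal.ofReal (‖x‖ ^ (β * s))

/-!
Cut the ball `B(0,R)` into the dyadic annuli `R/2^(j+1) ≤ |x| ≤ R/2^j`. On the annulus of radius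
`r` the weight `|x|^(βp)` is at most a constant times `r^((β-δ)p) |x|^(δp)`, and Hölder's inequality
with exponent `p₀/p` bounds the resulting integral by `(r^μ ‖f‖^p₀)^(p/p₀) |B(0,2r)|^(1-p/p₀)`.
The relation between the exponents turns this into `C r^λ ‖f‖^p`, and since `λ > 0` the sum over the
annuli is a convergent geometric series, of size `≲ R^λ ‖f‖^p`.
-/

section DyadicAnnulus

variable {E : Type*} [NormedAddCommGroup E]

def dyadicAnnulus (r : ℝ) : Set E := (‖·‖) ⁻¹' Icc (r / 2) r

lemma dyadicAnnulus_subset_ball {r : ℝ} (hr : 0 < r) :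
    dyadicAnnulus r ⊆ ball (0 : E) (2 * r) := fun _ hx =>
  mem_ball_zero_iff.2 (hx.2.trans_lt (by linarith))

lemma ball_subset_union_dyadicAnnulus (R : ℝ) :
    ball (0 : E) R ⊆ {0} ∪ ⋃ j : ℕ, dyadicAnnulus (R / 2 ^ j) := by
  intro x hx
  rcases eq_or_ne x 0 with rfl | hx0
  · exact Or.inl rfl
  have hxpos : 0 < ‖x‖ := norm_pos_iff.2 hx0
  obtain ⟨j, hj, hj'⟩ :=
    exists_nat_pow_near ((one_le_div hxpos).2 (mem_ball_zero_iff.1 hx).le) one_lt_two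
  refine Or.inr (mem_iUnion.2 ⟨j, ?_, ?_⟩)
  · rw [div_div, ← pow_succ, div_le_iff₀ (by positivity)]
    rw [div_lt_iff₀ hxpos] at hj'
    linarith
  · rw [le_div_iff₀ (by positivity), mul_comm]
    exact (le_div_iff₀ hxpos).1 hj

lemma rpow_norm_le_of_mem_dyadicAnnulus {x : E} {r : ℝ} (a : ℝ) (hr : 0 < r)
    (hx : x ∈ dyadicAnnulus r) : ‖x‖ ^ a ≤ 2 ^ |a| * r ^ a := by
  obtain ⟨hx1, hx2⟩ := hx
  have hxpos : 0 < ‖x‖ := lt_of_lt_of_le (by positivity) hx1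
  rcases le_or_gt 0 a with ha | ha
  · calc ‖x‖ ^ a ≤ r ^ a := Real.rpow_le_rpow hxpos.le hx2 ha
      _ ≤ 2 ^ |a| * r ^ a :=
        le_mul_of_one_le_left (by positivity) (Real.one_le_rpow one_le_two (abs_nonneg a))
  · calc ‖x‖ ^ a ≤ (r / 2) ^ a := Real.rpow_le_rpow_of_nonpos (by positivity) hx1 ha.le
      _ = 2 ^ |a| * r ^ a := by
        rw [abs_of_neg ha, Real.div_rpow hr.le zero_le_two, Real.rpow_neg zero_le_two]
        ring

lemma tsum_ofReal_div_two_pow_rpow {R : ℝ} (lam : ℝ) (hR : 0 ≤ R) :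
    ∑' j : ℕ, ENNReal.ofReal ((R / 2 ^ j) ^ lam) =
      ENNReal.ofReal (R ^ lam) * (1 - ENNReal.ofReal (2 ^ (-lam)))⁻¹ := by
  have hterm (j : ℕ) : ENNReal.ofReal ((R / 2 ^ j) ^ lam) =
      ENNReal.ofReal (R ^ lam) * ENNReal.ofReal (2 ^ (-lam)) ^ j := by
    rw [← ENNReal.ofReal_pow (by positivity), ← ENNReal.ofReal_mul (by positivity),
      Real.div_rpow hR (by positivity), ← Real.rpow_natCast, ← Real.rpow_mul zero_le_two,
      ← Real.rpow_natCast, ← Real.rpow_mul zero_le_two, div_eq_mul_inv,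
      ← Real.rpow_neg zero_le_two, neg_mul, mul_comm lam]
  rw [tsum_congr hterm, ENNReal.tsum_mul_left, ENNReal.tsum_geometric]

variable [MeasurableSpace E] {μ : Measure E} [NullSingletonClass μ]

lemma setLIntegral_ball_le_of_dyadicAnnulus {h : E → ℝ≥0∞} {K : ℝ≥0∞} {lam R : ℝ}
    (hR : 0 < R) (hA : ∀ r > 0, ∫⁻ x in dyadicAnnulus r, h x ∂μ ≤ K * ENNReal.ofReal (r ^ lam)) :
    ∫⁻ x in ball 0 R, h x ∂μ ≤
      K * ENNReal.ofReal (R ^ lam) * (1 - ENNReal.ofReal (2 ^ (-lam)))⁻¹ := by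
  calc ∫⁻ x in ball 0 R, h x ∂μ
      ≤ ∫⁻ x in {0} ∪ ⋃ j : ℕ, dyadicAnnulus (R / 2 ^ j), h x ∂μ :=
        lintegral_mono_set (ball_subset_union_dyadicAnnulus R)
    _ ≤ ∫⁻ x in {0}, h x ∂μ + ∫⁻ x in ⋃ j : ℕ, dyadicAnnulus (R / 2 ^ j), h x ∂μ :=
        lintegral_union_le _ _ _
    _ ≤ ∑' j : ℕ, ∫⁻ x in dyadicAnnulus (R / 2 ^ j), h x ∂μ := by
        rw [setLIntegral_measure_zero _ _ (measure_singleton 0), zero_add]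
        exact lintegral_iUnion_le _ _
    _ ≤ ∑' j : ℕ, K * ENNReal.ofReal ((R / 2 ^ j) ^ lam) :=
        ENNReal.tsum_le_tsum fun j => hA _ (by positivity)
    _ = K * ENNReal.ofReal (R ^ lam) * (1 - ENNReal.ofReal (2 ^ (-lam)))⁻¹ := by
        rw [ENNReal.tsum_mul_left, tsum_ofReal_div_two_pow_rpow lam hR.le, mul_assoc]

end DyadicAnnulus

lemma phiS_ne_zero (lam : ℝ) {R : ℝ} (hR : 0 < R) : phiS lam R ≠ 0 :=
  ENNReal.ofReal_ne_zero_iff.2 (Real.rpow_pos_of_pos hR lam)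

lemma lmNormE_phiS_le_iff {n : ℕ} {p lam : ℝ} {w g : Euc n → ℝ≥0∞} {M : ℝ≥0∞} (hp : 0 < p) :
    lmNormE n p (phiS lam) w g ≤ M ↔
      ∀ R > 0, ∫⁻ x in ball 0 R, g x ^ p * w x ≤ phiS lam R * M ^ p := by
  simp only [lmNormE, iSup₂_le_iff, one_div]
  refine forall₂_congr fun R hR => ?_
  rw [ENNReal.rpow_inv_le_iff hp, ENNReal.inv_mul_le_iff (phiS_ne_zero lam hR) ofReal_ne_top]

lemma lintegral_rpow_le_lintegral_rpow_mul_measure_univ {α : Type*} [MeasurableSpace α]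
    {μ : Measure α} {f : α → ℝ≥0∞} (hf : AEMeasurable f μ) {p q : ℝ} (hp : 0 < p)
    (hpq : p ≤ q) :
    ∫⁻ x, f x ^ p ∂μ ≤ (∫⁻ x, f x ^ q ∂μ) ^ (p / q) * μ univ ^ (1 - p / q) := by
  have h := ENNReal.rpow_le_rpow
    (eLpNorm'_le_eLpNorm'_mul_rpow_measure_univ hp hpq hf.aestronglyMeasurable) hp.le
  simp only [eLpNorm'_eq_lintegral_enorm, enorm_eq_self] at h
  rwa [← ENNReal.rpow_mul, one_div_mul_cancel hp.ne', ENNReal.rpow_one,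
    ENNReal.mul_rpow_of_nonneg _ _ hp.le, ← ENNReal.rpow_mul, ← ENNReal.rpow_mul,
    one_div_mul_eq_div, sub_mul, one_div_mul_cancel hp.ne', one_div_mul_eq_div] at h

lemma measurable_powW (n : ℕ) (β s : ℝ) : Measurable (powW n β s) := by
  unfold powW; fun_prop

lemma mul_powW_one_rpow {n : ℕ} (a : ℝ≥0∞) (δ : ℝ) {s : ℝ} (hs : 0 ≤ s) (x : Euc n) :
    (a * powW n δ 1 x) ^ s = a ^ s * powW n δ s x := by
  rw [ENNReal.mul_rpow_of_nonneg _ _ hs, powW, powW,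
    ENNReal.ofReal_rpow_of_nonneg (by positivity) hs, ← Real.rpow_mul (norm_nonneg x), mul_one]

lemma setLIntegral_mul_powW_le {n : ℕ} {g : Euc n → ℝ≥0∞} (hg : AEMeasurable g) (A : Set (Euc n))
    (δ : ℝ) {p q : ℝ} (hp : 0 < p) (hpq : p ≤ q) :
    ∫⁻ x in A, g x ^ p * powW n δ p x ≤
      (∫⁻ x in A, g x ^ q * powW n δ q x) ^ (p / q) * volume A ^ (1 - p / q) := by
  have h := lintegral_rpow_le_lintegral_rpow_mul_measure_univ (μ := volume.restrict A)
    (hg.mul (measurable_powW n δ 1).aemeasurable).restrict hp hpq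
  simpa only [Pi.mul_apply, mul_powW_one_rpow _ δ hp.le, mul_powW_one_rpow _ δ (hp.le.trans hpq),
    Measure.restrict_apply_univ] using h

lemma powW_le_of_mem_dyadicAnnulus {n : ℕ} {x : Euc n} {r : ℝ} (β δ p : ℝ) (hr : 0 < r)
    (hx : x ∈ dyadicAnnulus r) :
    powW n β p x ≤
      ENNReal.ofReal (2 ^ |(β - δ) * p| * r ^ ((β - δ) * p)) * powW n δ p x := by
  have hxpos : 0 < ‖x‖ := lt_of_lt_of_le (by positivity) hx.1
  rw [powW, powW, ← ENNReal.ofReal_mul (by positivity),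
    show β * p = (β - δ) * p + δ * p by ring, Real.rpow_add hxpos]
  gcongr
  exact rpow_norm_le_of_mem_dyadicAnnulus _ hr hx

lemma setLIntegral_dyadicAnnulus_le {n : ℕ} {g : Euc n → ℝ≥0∞} (hg : AEMeasurable g)
    {p p0 : ℝ} (hp : 0 < p) (hpp0 : p ≤ p0) (mu β δ : ℝ) {r : ℝ} (hr : 0 < r) :
    ∫⁻ x in dyadicAnnulus r, g x ^ p * powW n β p x ≤
      ENNReal.ofReal (2 ^ |(β - δ) * p| * r ^ ((β - δ) * p)) *
        ((phiS mu (2 * r) * lmNormE n p0 (phiS mu) (powW n δ p0) g ^ p0) ^ (p / p0) *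
          volume (ball (0 : Euc n) (2 * r)) ^ (1 - p / p0)) := by
  have hp0 : 0 < p0 := hp.trans_le hpp0
  set K := ENNReal.ofReal (2 ^ |(β - δ) * p| * r ^ ((β - δ) * p))
  calc ∫⁻ x in dyadicAnnulus r, g x ^ p * powW n β p x
      ≤ ∫⁻ x in dyadicAnnulus r, K * (g x ^ p * powW n δ p x) :=
        setLIntegral_mono' (measurable_norm measurableSet_Icc) fun x hx => by
          rw [mul_left_comm]
          exact mul_le_mul_right (powW_le_of_mem_dyadicAnnulus β δ p hr hx) _
    _ = K * ∫⁻ x in dyadicAnnulus r, g x ^ p * powW n δ p x :=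
        lintegral_const_mul' _ _ ofReal_ne_top
    _ ≤ K * ((∫⁻ x in dyadicAnnulus r, g x ^ p0 * powW n δ p0 x) ^ (p / p0) *
          volume (dyadicAnnulus r : Set (Euc n)) ^ (1 - p / p0)) := by
        gcongr
        exact setLIntegral_mul_powW_le hg _ δ hp hpp0
    _ ≤ _ := by
        have hA := dyadicAnnulus_subset_ball (E := Euc n) hr
        gcongr
        · exact (lintegral_mono_set hA).trans
            ((lmNormE_phiS_le_iff hp0).1 le_rfl _ (by positivity))
        · exact sub_nonneg.2 ((div_le_one hp0).2 hpp0)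

lemma exists_setLIntegral_dyadicAnnulus_le {n : ℕ} {p p0 lam mu β δ : ℝ} (hp : 0 < p)
    (hpp0 : p ≤ p0) (hrel : β + (n - lam) / p = δ + (n - mu) / p0) :
    ∃ C : ℝ≥0∞, C < ⊤ ∧ ∀ g : Euc n → ℝ≥0∞, AEMeasurable g → ∀ r > 0,
      ∫⁻ x in dyadicAnnulus r, g x ^ p * powW n β p x ≤
        C * lmNormE n p0 (phiS mu) (powW n δ p0) g ^ p * ENNReal.ofReal (r ^ lam) := by
  have hp0 : 0 < p0 := hp.trans_le hpp0
  set e := (β - δ) * p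
  set θ := 1 - p / p0
  have hθ : 0 ≤ θ := sub_nonneg.2 ((div_le_one hp0).2 hpp0)
  have hlam : lam = e + mu * (p / p0) + n * θ := by
    field_simp at hrel
    simp only [e, θ]
    field_simp
    linear_combination (-1) * hrel
  set c := volume (ball (0 : Euc n) 1)
  refine ⟨ENNReal.ofReal (2 ^ (|e| + mu * (p / p0) + n * θ)) * c ^ θ,
    ENNReal.mul_lt_top ofReal_lt_top (ENNReal.rpow_lt_top_of_nonneg hθ measure_ball_lt_top.ne),
    fun g hg r hr => (setLIntegral_dyadicAnnulus_le hg hp hpp0 mu β δ hr).trans_eq ?_⟩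
  set N := lmNormE n p0 (phiS mu) (powW n δ p0) g
  have h2r : 0 < 2 * r := by positivity
  have hreal : 2 ^ |e| * r ^ e * ((2 * r) ^ mu) ^ (p / p0) * ((2 * r) ^ n) ^ θ =
      2 ^ (|e| + mu * (p / p0) + n * θ) * r ^ lam := by
    rw [← Real.rpow_natCast, ← Real.rpow_mul h2r.le, ← Real.rpow_mul h2r.le,
      Real.mul_rpow zero_le_two hr.le, Real.mul_rpow zero_le_two hr.le, hlam,
      Real.rpow_add two_pos, Real.rpow_add two_pos, Real.rpow_add hr, Real.rpow_add hr]
    ring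
  calc ENNReal.ofReal (2 ^ |e| * r ^ e) *
        ((phiS mu (2 * r) * N ^ p0) ^ (p / p0) * volume (ball (0 : Euc n) (2 * r)) ^ θ)
      = ENNReal.ofReal (2 ^ |e| * r ^ e * ((2 * r) ^ mu) ^ (p / p0) * ((2 * r) ^ n) ^ θ) *
          c ^ θ * N ^ p := by
        rw [Measure.addHaar_ball_of_pos _ _ h2r, finrank_euclideanSpace_fin, phiS,
          ENNReal.mul_rpow_of_nonneg _ _ (by positivity), ENNReal.mul_rpow_of_nonneg _ _ hθ,
          ← ENNReal.rpow_mul, mul_div_cancel₀ p hp0.ne',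
          ENNReal.ofReal_rpow_of_nonneg (by positivity) (by positivity),
          ENNReal.ofReal_rpow_of_nonneg (by positivity) hθ,
          ENNReal.ofReal_mul (p := 2 ^ |e| * r ^ e * ((2 * r) ^ mu) ^ (p / p0)) (by positivity),
          ENNReal.ofReal_mul (p := 2 ^ |e| * r ^ e) (by positivity)]
        ring
    _ = ENNReal.ofReal (2 ^ (|e| + mu * (p / p0) + n * θ)) * c ^ θ * N ^ p *
          ENNReal.ofReal (r ^ lam) := by
        rw [hreal, ENNReal.ofReal_mul (by positivity)]
        ring

theorem stmt13_general (n : ℕ) (hn : 0 < n) (p p0 : ℝ) (hp : 1 ≤ p) (hpp0 : p < p0)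
    (lam mu : ℝ) (hlam : 0 < lam) (β δ : ℝ)
    (hrel : β + (n - lam) / p = δ + (n - mu) / p0) :
    ∃ C : ℝ≥0∞, C < ⊤ ∧ ∀ f : Euc n → ℝ, Measurable f →
      lmNorm n p (phiS lam) (powW n β p) f ≤ C * lmNorm n p0 (phiS mu) (powW n δ p0) f := by
  have hp_pos : 0 < p := zero_lt_one.trans_le hp
  have : NeZero n := ⟨hn.ne'⟩
  obtain ⟨C, hC, hannulus⟩ := exists_setLIntegral_dyadicAnnulus_le hp_pos hpp0.le hrel
  set S := (1 - ENNReal.ofReal (2 ^ (-lam)))⁻¹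
  have hS : S < ⊤ := ENNReal.inv_lt_top.2 <| tsub_pos_of_lt <| ENNReal.ofReal_lt_one.2 <|
    Real.rpow_lt_one_of_one_lt_of_neg one_lt_two (neg_neg_of_pos hlam)
  refine ⟨(C * S) ^ (1 / p), ENNReal.rpow_lt_top_of_nonneg (by positivity)
    (ENNReal.mul_lt_top hC hS).ne, fun f hf => (lmNormE_phiS_le_iff hp_pos).2 fun R hR => ?_⟩
  calc ∫⁻ x in ball 0 R, ENNReal.ofReal |f x| ^ p * powW n β p x
      ≤ C * lmNorm n p0 (phiS mu) (powW n δ p0) f ^ p * ENNReal.ofReal (R ^ lam) * S :=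
        setLIntegral_ball_le_of_dyadicAnnulus hR (hannulus _ hf.abs.ennreal_ofReal.aemeasurable)
    _ = phiS lam R * ((C * S) ^ (1 / p) * lmNorm n p0 (phiS mu) (powW n δ p0) f) ^ p := by
        rw [ENNReal.mul_rpow_of_nonneg _ _ hp_pos.le, ← ENNReal.rpow_mul, one_div_mul_cancel hp_pos.ne',
          ENNReal.rpow_one, phiS]
        ring

theorem stmt13 (n : ℕ) (hn : 0 < n) (p p0 : ℝ) (hp : 1 ≤ p) (hpp0 : p < p0)
    (lam mu : ℝ) (hlam : 0 < lam) (hmu : 0 < mu) (β δ : ℝ)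
    (hrel : β + (n - lam) / p = δ + (n - mu) / p0) :
    ∃ C : ℝ≥0∞, C < ⊤ ∧ ∀ f : Euc n → ℝ, Measurable f →
      lmNorm n p (phiS lam) (powW n β p) f ≤ C * lmNorm n p0 (phiS mu) (powW n δ p0) f :=
  stmt13_general n hn p p0 hp hpp0 lam mu hlam β δ hrel
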